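/- Let G be an abelian group and S a finite generating subset with 0 ∈ S and S ≠ G. Let H be a nonzero subgroup of G which is a 1-fragment of S, and let K be a subgroup of G/H which is a 1-fragment of φ_H(S). Then φ_H^{−1}(K) is a 2-fragment of S. -/

import Mathlib

open Pointwise

variable {G : Type*} [AddCommGroup G]

/-- The boundary of `X` with respect to `S`: `∂(X) = (X + S) \ X`. -/
def bdry (S X : Set G) : Set G := (X + S) \ X

/-- The co-image of `X` with respect to `S`: `∇(X) = G \ (X + S)`. -/
def coimg (S X : Set G) : Set G := (X + S)ᶜ

/-- `S` is `k`-separable: some finite `X` has `|X| ≥ k` and `|∇(X)| ≥ k`. -/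
def IsSep (S : Set G) (k : ℕ) : Prop :=
  ∃ X : Set G, X.Finite ∧ k ≤ X.encard ∧ k ≤ (coimg S X).encard

/-- The `k`-th connectivity `κ_k(S) = min {|∂(X)| : X finite, |X| ≥ k, |∇(X)| ≥ k}`. -/
noncomputable def kappa (S : Set G) (k : ℕ) : ℕ∞ :=
  ⨅ X ∈ {X : Set G | X.Finite ∧ k ≤ X.encard ∧ k ≤ (coimg S X).encard}, (bdry S X).encard

/-- `X` is a `k`-fragment of `S`. -/
def IsFragment (S X : Set G) (k : ℕ) : Prop :=
  X.Finite ∧ k ≤ X.encard ∧ k ≤ (coimg S X).encard ∧ (bdry S X).encard = kappa S k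

/-- `X` is a `k`-atom of `S`: a `k`-fragment of minimum cardinality. -/
def IsAtomK (S X : Set G) (k : ℕ) : Prop :=
  IsFragment S X k ∧ ∀ Y : Set G, IsFragment S Y k → X.encard ≤ Y.encard

/-!
Everything pulls back along `φ = φ_H`: since `φ⁻¹(A) + S = φ⁻¹(A + φ(S))`, the boundary and
co-image of `φ⁻¹(A)` are the preimages of those of `A`, and `|φ⁻¹(B)| = |H| · |B|`.
As `H = φ⁻¹{0}`, this gives `κ₁(S) = |∂H| = |H| · |∂{0}| ≥ |H| · κ₁(φ(S)) = |∂φ⁻¹(K)|`.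
On the other hand `|H| ≥ 2` makes `φ⁻¹(K)` admissible for `κ₂`, so `|∂φ⁻¹(K)| ≥ κ₂(S) ≥ κ₁(S)`.
-/

open QuotientAddGroup

section Connectivity

variable {S X : Set G} {k l : ℕ}

lemma kappa_le_encard_bdry (hX : X.Finite) (hk : k ≤ X.encard) (hk' : k ≤ (coimg S X).encard) :
    kappa S k ≤ (bdry S X).encard :=
  iInf₂_le X ⟨hX, hk, hk'⟩

lemma kappa_mono (hkl : k ≤ l) : kappa S k ≤ kappa S l :=
  le_iInf₂ fun _ ⟨hY, hYl, hYl'⟩ => kappa_le_encard_bdry hY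
    ((Nat.cast_le.2 hkl).trans hYl) ((Nat.cast_le.2 hkl).trans hYl')

lemma IsFragment.of_encard_bdry_le (hX : X.Finite) (hk : k ≤ X.encard)
    (hk' : k ≤ (coimg S X).encard) (h : (bdry S X).encard ≤ kappa S k) : IsFragment S X k :=
  ⟨hX, hk, hk', h.antisymm (kappa_le_encard_bdry hX hk hk')⟩

end Connectivity

section Quotient

variable (H : AddSubgroup G)

lemma encard_preimage_mk (T : Set (G ⧸ H)) :
    ((mk : G → G ⧸ H) ⁻¹' T).encard = (H : Set G).encard * T.encard := by
  simp only [Set.encard, ENat.card_congr (preimageMkEquivAddSubgroupProdSet H T), ENat.card_prod]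
  rfl

lemma finite_preimage_mk {T : Set (G ⧸ H)} (hH : (H : Set G).Finite) (hT : T.Finite) :
    ((mk : G → G ⧸ H) ⁻¹' T).Finite := by
  rw [← Set.encard_lt_top_iff, encard_preimage_mk]
  exact WithTop.mul_lt_top hH.encard_lt_top hT.encard_lt_top

lemma preimage_mk_add (A : Set (G ⧸ H)) (S : Set G) :
    (mk : G → G ⧸ H) ⁻¹' A + S = mk ⁻¹' (A + mk '' S) := by
  ext x
  constructor
  · rintro ⟨a, ha, s, hs, rfl⟩
    exact ⟨a, ha, s, ⟨s, hs, rfl⟩, rfl⟩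
  · rintro ⟨a, ha, -, ⟨s, hs, rfl⟩, hsum⟩
    refine ⟨x - s, ?_, s, hs, sub_add_cancel x s⟩
    simpa [Set.mem_preimage, mk_sub, ← hsum] using ha

lemma bdry_preimage_mk (S : Set G) (A : Set (G ⧸ H)) :
    bdry S ((mk : G → G ⧸ H) ⁻¹' A) = mk ⁻¹' bdry (mk '' S) A := by
  rw [bdry, bdry, preimage_mk_add, Set.preimage_sdiff]

lemma coimg_preimage_mk (S : Set G) (A : Set (G ⧸ H)) :
    coimg S ((mk : G → G ⧸ H) ⁻¹' A) = mk ⁻¹' coimg (mk '' S) A := by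
  rw [coimg, coimg, preimage_mk_add, Set.preimage_compl]

lemma two_le_encard_preimage_mk {T : Set (G ⧸ H)} (hH : H ≠ ⊥) (hT : 1 ≤ T.encard) :
    2 ≤ ((mk : G → G ⧸ H) ⁻¹' T).encard := by
  have hH2 : 2 ≤ (H : Set G).encard := by
    rw [← one_add_one_eq_two, ENat.add_one_le_iff ENat.one_ne_top, Set.one_lt_encard_iff_nontrivial,
      ← Set.nontrivial_coe_sort]
    exact (AddSubgroup.nontrivial_iff_ne_bot H).2 hH
  rw [encard_preimage_mk]
  simpa using mul_le_mul' hH2 hT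

end Quotient

theorem stmt_10_general (S : Set G)
    (H : AddSubgroup G) (hH0 : H ≠ ⊥) (hH : IsFragment S (H : Set G) 1)
    (K : AddSubgroup (G ⧸ H))
    (hK : IsFragment ((QuotientAddGroup.mk : G → G ⧸ H) '' S) (K : Set (G ⧸ H)) 1) :
    IsFragment S ((QuotientAddGroup.mk : G → G ⧸ H) ⁻¹' (K : Set (G ⧸ H))) 2 := by
  obtain ⟨hHfin, -, hHco, hHκ⟩ := hH
  obtain ⟨hKfin, hK1, hKco, hKκ⟩ := hK
  rw [← preimage_mk_zero H, mk_zero] at hHco hHκ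
  rw [coimg_preimage_mk, Nat.cast_one, Set.one_le_encard_iff_nonempty] at hHco
  set φS : Set (G ⧸ H) := mk '' S
  have hκ_zero : kappa φS 1 ≤ (bdry φS {0}).encard :=
    kappa_le_encard_bdry (Set.finite_singleton _) (by rw [Set.encard_singleton, Nat.cast_one])
      (by rw [Nat.cast_one, Set.one_le_encard_iff_nonempty]
          exact Set.nonempty_of_nonempty_preimage hHco)
  refine IsFragment.of_encard_bdry_le (finite_preimage_mk H hHfin hKfin)
    (by exact_mod_cast two_le_encard_preimage_mk H hH0 hK1) ?_ ?_
  · rw [coimg_preimage_mk]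
    exact_mod_cast two_le_encard_preimage_mk H hH0 hKco
  calc (bdry S (mk ⁻¹' (K : Set (G ⧸ H)))).encard = (H : Set G).encard * kappa φS 1 := by
        rw [bdry_preimage_mk, encard_preimage_mk, hKκ]
    _ ≤ (H : Set G).encard * (bdry φS {0}).encard := by gcongr
    _ = kappa S 1 := by rw [← encard_preimage_mk, ← bdry_preimage_mk, hHκ]
    _ ≤ kappa S 2 := kappa_mono one_le_two

/-- If a nonzero subgroup `H` is a `1`-fragment of `S` and a subgroup
`K` of `G/H` is a `1`-fragment of `φ_H(S)`, then `φ_H⁻¹(K)` is a `2`-fragment of `S`. -/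
theorem stmt_10 (S : Set G) (hfin : S.Finite) (h0 : (0 : G) ∈ S)
    (hgen : AddSubgroup.closure S = ⊤) (hne : S ≠ Set.univ)
    (H : AddSubgroup G) (hH0 : H ≠ ⊥) (hH : IsFragment S (H : Set G) 1)
    (K : AddSubgroup (G ⧸ H))
    (hK : IsFragment ((QuotientAddGroup.mk : G → G ⧸ H) '' S) (K : Set (G ⧸ H)) 1) :
    IsFragment S ((QuotientAddGroup.mk : G → G ⧸ H) ⁻¹' (K : Set (G ⧸ H))) 2 :=
  stmt_10_general S H hH0 hH K hK
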